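/- arXiv:0909.2274 — 2 statements merged into one kernel-verified Lean document; each statement's English description precedes it below -/
import Mathlib

section
/- Suppose Pat(w, Σ, n) = π, and a ∈ {1, ..., n−1} is such that, setting i = π⁻¹(a) and j = π⁻¹(a+1), both i < n and j < n and π(i+1) > π(j+1). Then w_{π⁻¹(a)} < w_{π⁻¹(a+1)} strictly. -/
/-- Strict lexicographic order on infinite words. -/
def LexLt {α : Type*} [LinearOrder α] (x y : ℕ → α) : Prop :=
  ∃ k, (∀ i < k, x i = y i) ∧ x k < y k

/-- `Pat w n π` : the first `n` left shifts of `w` are lexicographically ordered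
according to the permutation `π` (0-indexed). -/
def Pat {α : Type*} [LinearOrder α] (w : ℕ → α) (n : ℕ) (π : Equiv.Perm (Fin n)) : Prop :=
  ∀ i j : Fin n, (LexLt (fun m => w (m + i.val)) (fun m => w (m + j.val)) ↔ π i < π j)

/-! If the shifts starting at `i` and `j` are adjacent in lexicographic order, their first
letters satisfy `w i ≤ w j`; were they equal, the shifts starting at `i + 1` and `j + 1` would
be in the same order, contradicting `π (j + 1) < π (i + 1)`. -/

namespace LexLt

variable {α : Type*} [LinearOrder α] {x y : ℕ → α}

theorem head_le (h : LexLt x y) : x 0 ≤ y 0 := by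
  obtain ⟨k, hpre, hk⟩ := h
  rcases Nat.eq_zero_or_pos k with rfl | hpos
  · exact hk.le
  · exact (hpre 0 hpos).le

theorem tail (h : LexLt x y) (h0 : x 0 = y 0) :
    LexLt (fun m => x (m + 1)) (fun m => y (m + 1)) := by
  obtain ⟨k, hpre, hk⟩ := h
  cases k with
  | zero => exact absurd h0 hk.ne
  | succ k => exact ⟨k, fun i hi => hpre (i + 1) (by omega), hk⟩

end LexLt

theorem Pat.lt_of_succ_gt {α : Type*} [LinearOrder α] {n : ℕ} {w : ℕ → α}
    {π : Equiv.Perm (Fin n)} (hPat : Pat w n π) {i j : Fin n} (hij : π i < π j)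
    (hi : i.val + 1 < n) (hj : j.val + 1 < n) (hd : π ⟨j.val + 1, hj⟩ < π ⟨i.val + 1, hi⟩) :
    w i < w j := by
  have hlex := (hPat i j).mpr hij
  refine lt_of_le_of_ne (by simpa using hlex.head_le) fun heq => ?_
  have htail := hlex.tail (by simpa using heq)
  simp only [add_right_comm _ 1] at htail
  exact hd.not_gt ((hPat ⟨i.val + 1, hi⟩ ⟨j.val + 1, hj⟩).mp htail)

/-- Each `a ∈ A(π)` forces a strict inequality `w_{π⁻¹(a)} < w_{π⁻¹(a+1)}`. -/
theorem stmt4 {α : Type*} [LinearOrder α] {n : ℕ} (w : ℕ → α) (π : Equiv.Perm (Fin n))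
    (hPat : Pat w n π) (a : Fin n) (ha : a.val + 1 < n)
    (hi : (π.symm a).val + 1 < n) (hj : (π.symm ⟨a.val + 1, ha⟩).val + 1 < n)
    (hd : π ⟨(π.symm ⟨a.val + 1, ha⟩).val + 1, hj⟩ < π ⟨(π.symm a).val + 1, hi⟩) :
    w (π.symm a).val < w (π.symm ⟨a.val + 1, ha⟩).val := by
  refine hPat.lt_of_succ_gt ?_ hi hj hd
  simp only [Equiv.apply_symm_apply, Fin.lt_def, Nat.lt_succ_self]
end

section
/- Let w = u p^{n−1} 0^∞ where u has length k−1, p has length n−k with 1 ≤ k ≤ n−1, and p is primitive. If π = Pat(w, Σ, n) is defined, then π(n) = π(k) − 1. -/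
/-- A finite word is primitive if it is not an `m`-fold power with `m > 1`. -/
def Primitive {α : Type*} (u : List α) : Prop :=
  ∀ (q : List α) (m : ℕ), 1 < m → u ≠ (List.replicate m q).flatten

/-- The infinite word `u p^{n-1} 0^∞`. -/
def wordOf (u p : List ℕ) (n : ℕ) : ℕ → ℕ :=
  fun m => (u ++ (List.replicate (n - 1) p).flatten).getD m 0
/-!
Shift `k - 1` of `w` is `Y = p^{n-1} 0^∞` and shift `n - 1` is `X = p^{n-2} 0^∞`. Letterwise
`X ≤ Y`, and the two are distinct shifts, so `X < Y`; every shift strictly between them begins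
with `p^{n-2}`. A shift starting inside the copies of `p` at an offset `0 < s < |p|` would make
`s` a period of `p^∞`, which primitivity excludes. A shift starting inside `u`, `r` letters
before `Y`, forces `r` to be a period of `p^∞`; it then dominates `Y` letterwise and so lies
above `Y`. Hence `X` and `Y` are adjacent in the pattern.
-/

open Function Set

section Lex

variable {α : Type*} [LinearOrder α] {x y z : ℕ → α}

theorem LexLt.irrefl (x : ℕ → α) : ¬ LexLt x x :=
  fun ⟨_, _, h⟩ => lt_irrefl _ h

theorem LexLt.asymm (hxy : LexLt x y) : ¬ LexLt y x := by
  obtain ⟨a, ha, hxya⟩ := hxy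
  rintro ⟨b, hb, hyxb⟩
  rcases lt_trichotomy a b with hab | rfl | hba
  · exact hxya.ne (hb a hab).symm
  · exact lt_asymm hxya hyxb
  · exact hyxb.ne (ha b hba).symm

theorem LexLt.eq_of_between {M : ℕ} (hxz : LexLt x z) (hzy : LexLt z y)
    (hxy : ∀ i < M, x i = y i) : ∀ i < M, z i = x i := by
  obtain ⟨a, ha, hxza⟩ := hxz
  obtain ⟨b, hb, hzyb⟩ := hzy
  suffices hMa : M ≤ a from fun i hi => (ha i (hi.trans_le hMa)).symm
  by_contra! haM
  rcases lt_trichotomy a b with hab | rfl | hba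
  · exact hxza.ne ((hxy a haM).trans (hb a hab).symm)
  · exact (hxza.trans hzyb).ne (hxy a haM)
  · exact hzyb.ne ((ha b hba).symm.trans (hxy b (hba.trans haM)))

theorem lexLt_of_le_of_ne (hle : x ≤ y) (hne : x ≠ y) : LexLt x y := by
  classical
  have hdiff : ∃ i, x i ≠ y i := by
    by_contra! h
    exact hne (funext h)
  refine ⟨Nat.find hdiff, fun i hi => not_not.1 (Nat.find_min hdiff hi), ?_⟩
  exact (hle _).lt_of_ne (Nat.find_spec hdiff)

end Lex

section Periodic

variable {α : Type*} {f : ℕ → α}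

theorem Function.Periodic.nat_mod {a b : ℕ} (ha : Periodic f a) (hb : Periodic f b) :
    Periodic f (b % a) := fun x => by
  have hq : Periodic f (b / a * a) := by simpa using ha.nat_mul (b / a)
  rw [← hq (x + b % a), add_assoc, Nat.mod_add_div', hb]

theorem Function.Periodic.nat_gcd {a b : ℕ} (ha : Periodic f a) (hb : Periodic f b) :
    Periodic f (Nat.gcd a b) := by
  induction a, b using Nat.gcd.induction with
  | H0 b => simpa using hb
  | H1 a b _ ih => rw [Nat.gcd_rec]; exact ih (ha.nat_mod hb) ha

theorem Function.Periodic.of_eq_add_of_lt {L r : ℕ} (hf : Periodic f L) (hL : 0 < L)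
    (h : ∀ m < L, f (m + r) = f m) : Periodic f r := fun x => by
  have hq : Periodic f (x / L * L) := by simpa using hf.nat_mul (x / L)
  rw [← Nat.mod_add_div' x L, add_right_comm, hq, hq, h _ (Nat.mod_lt x hL)]

end Periodic

/-- The infinite word `p^∞`. -/
def cyclicWord (p : List ℕ) : ℕ → ℕ := fun i => p.getD (i % p.length) 0

theorem periodic_cyclicWord (p : List ℕ) : Periodic (cyclicWord p) p.length := fun i => by
  simp [cyclicWord]

theorem getD_flatten_replicate (q : List ℕ) (c i : ℕ) :
    ((List.replicate c q).flatten).getD i 0 = (Iio (c * q.length)).indicator (cyclicWord q) i := by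
  induction c generalizing i with
  | zero => simp
  | succ c ih =>
    rw [List.replicate_succ, List.flatten_cons, add_one_mul]
    rcases lt_or_ge i q.length with hi | hi
    · rw [List.getD_append _ _ _ _ hi, indicator_of_mem (mem_Iio.2 (by omega)), cyclicWord,
        Nat.mod_eq_of_lt hi]
    · obtain ⟨j, rfl⟩ := Nat.exists_eq_add_of_le hi
      rw [List.getD_append_right _ _ _ _ hi, Nat.add_sub_cancel_left, ih]
      simp only [indicator_apply, mem_Iio, cyclicWord, Nat.add_mod_left]
      congr 1
      simp only [eq_iff_iff]
      omega

theorem Primitive.length_pos {p : List ℕ} (hp : Primitive p) : 0 < p.length := by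
  refine List.length_pos_iff.2 fun h => hp [] 2 one_lt_two ?_
  simp [h]

theorem eq_flatten_replicate_take {p : List ℕ} {g : ℕ} (hg : g ∣ p.length)
    (hper : Periodic (cyclicWord p) g) : p = (List.replicate (p.length / g) (p.take g)).flatten := by
  rcases eq_or_ne p [] with rfl | hne
  · simp
  have hL : 0 < p.length := List.length_pos_iff.2 hne
  have hg0 : 0 < g := Nat.pos_of_dvd_of_pos hg hL
  have hgL : g ≤ p.length := Nat.le_of_dvd hL hg
  have hlen : (p.take g).length = g := List.length_take_of_le hgL
  have hmul : p.length / g * g = p.length := Nat.div_mul_cancel hg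
  refine List.ext_getElem (by simp [hlen, hmul]) fun i hi _ => ?_
  have hig : i % g < g := Nat.mod_lt i hg0
  have hq : Periodic (cyclicWord p) (i / g * g) := by simpa using hper.nat_mul (i / g)
  calc p[i] = cyclicWord p i := by
        simp only [cyclicWord, Nat.mod_eq_of_lt hi, List.getD_eq_getElem _ _ hi]
    _ = cyclicWord p (i % g) := by rw [← hq (i % g), Nat.mod_add_div']
    _ = (p.take g).getD (i % g) 0 := by
      simp [cyclicWord, Nat.mod_eq_of_lt (hig.trans_le hgL), List.getD_eq_getElem?_getD, hig]
    _ = _ := by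
      rw [← List.getD_eq_getElem _ 0, getD_flatten_replicate, hlen, hmul,
        indicator_of_mem (mem_Iio.2 hi), cyclicWord, hlen]

theorem Primitive.dvd_of_periodic {p : List ℕ} (hp : Primitive p) {s : ℕ}
    (hs : Periodic (cyclicWord p) s) : p.length ∣ s := by
  set g := Nat.gcd s p.length
  have hgL : g ∣ p.length := Nat.gcd_dvd_right s p.length
  have hg : 0 < g := Nat.gcd_pos_of_pos_right s hp.length_pos
  have hrep := eq_flatten_replicate_take hgL (hs.nat_gcd (periodic_cyclicWord p))
  obtain ⟨q, hq⟩ := hgL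
  rw [hq, Nat.mul_div_cancel_left _ hg] at hrep
  have hq1 : q ≤ 1 := not_lt.1 fun h => hp _ q h hrep
  have hq0 : q ≠ 0 := by rintro rfl; simpa [hq] using hp.length_pos
  obtain rfl : q = 1 := by omega
  rw [hq, mul_one]
  exact Nat.gcd_dvd_left s p.length

def shift {α : Type*} (w : ℕ → α) (j : ℕ) : ℕ → α := fun m => w (m + j)

theorem shift_shift {α : Type*} (w : ℕ → α) (a b : ℕ) : shift (shift w a) b = shift w (a + b) := by
  funext m
  simp only [shift, add_assoc, add_comm b a]

section Pat

variable {α : Type*} [LinearOrder α] {w : ℕ → α} {n : ℕ} {π : Equiv.Perm (Fin n)}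

theorem Pat.lexLt_iff (h : Pat w n π) (i j : Fin n) :
    LexLt (shift w i) (shift w j) ↔ π i < π j :=
  h i j

theorem Pat.shift_ne (h : Pat w n π) {i j : Fin n} (hij : i ≠ j) : shift w i ≠ shift w j := by
  intro heq
  rcases (π.injective.ne hij).lt_or_gt with hlt | hlt
  · exact LexLt.irrefl _ (heq ▸ (h.lexLt_iff i j).2 hlt)
  · exact LexLt.irrefl _ (heq ▸ (h.lexLt_iff j i).2 hlt)

theorem Pat.val_add_one_eq (h : Pat w n π) {a b : Fin n} (hab : LexLt (shift w a) (shift w b))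
    (hbetween : ∀ j : Fin n, LexLt (shift w a) (shift w j) → ¬ LexLt (shift w j) (shift w b)) :
    (π a).val + 1 = (π b).val := by
  have hlt : π a < π b := (h.lexLt_iff a b).1 hab
  obtain ⟨j, hj⟩ := π.surjective ⟨(π a).val + 1, by omega⟩
  have haj : π a < π j := by simp [hj, Fin.lt_def]
  have hjb : ¬ π j < π b := mt (h.lexLt_iff j b).2 (hbetween j ((h.lexLt_iff a j).2 haj))
  rw [hj, not_lt, Fin.le_def] at hjb
  exact le_antisymm (Fin.lt_def.1 hlt) hjb

end Pat

theorem shift_wordOf_length (u p : List ℕ) (n : ℕ) :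
    shift (wordOf u p n) u.length = (Iio ((n - 1) * p.length)).indicator (cyclicWord p) := by
  funext i
  rw [shift, wordOf, List.getD_append_right _ _ _ _ (Nat.le_add_left _ _), Nat.add_sub_cancel,
    getD_flatten_replicate]

theorem shift_indicator_Iio_add {M : Type*} [Zero M] {f : ℕ → M} {L : ℕ} (hf : Periodic f L)
    (c : ℕ) : shift ((Iio (c + L)).indicator f) L = (Iio c).indicator f := by
  funext m
  simp only [shift, indicator_apply, mem_Iio, Nat.add_lt_add_iff_right, hf m]

theorem indicator_Iio_le_of_shift_eq {P Z : ℕ → ℕ} {c r : ℕ} (hr : Periodic P r)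
    (hZP : ∀ i < r, Z i = P i) (hZ : shift Z r = (Iio c).indicator P) :
    (Iio c).indicator P ≤ Z := by
  intro i
  by_cases hic : i < c
  · rw [indicator_of_mem (mem_Iio.2 hic)]
    rcases lt_or_ge i r with hir | hir
    · exact (hZP i hir).ge
    · obtain ⟨m, rfl⟩ := Nat.exists_eq_add_of_le' hir
      have hm := congrFun hZ m
      rw [shift, indicator_of_mem (mem_Iio.2 (by omega))] at hm
      rw [hm, hr]
  · rw [indicator_of_notMem (by simpa using hic)]
    exact Nat.zero_le _

theorem indicator_cyclicWord_le_of_shift_eq {p : List ℕ} {Z : ℕ → ℕ} {N r : ℕ}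
    (hr : r + p.length ≤ N + 1) (hZP : ∀ i < N * p.length, Z i = cyclicWord p i)
    (hZ : shift Z r = (Iio ((N + 1) * p.length)).indicator (cyclicWord p)) :
    (Iio ((N + 1) * p.length)).indicator (cyclicWord p) ≤ Z := by
  set L := p.length
  rcases Nat.eq_zero_or_pos L with hL0 | hL
  · intro i
    simp [hL0]
  have hNL : N ≤ N * L := Nat.le_mul_of_pos_right N hL
  have hper : Periodic (cyclicWord p) r := by
    refine (periodic_cyclicWord p).of_eq_add_of_lt hL fun m hm => ?_
    rcases Nat.lt_or_ge L 2 with hL1 | hL2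
    · have h1 : Periodic (cyclicWord p) 1 := by
        rw [← show L = 1 by omega]
        exact periodic_cyclicWord p
      obtain rfl : m = 0 := by omega
      simpa using (h1.nat_mul r).eq
    · have hm' := congrFun hZ m
      have h2 : 2 * N ≤ N * L := by nlinarith
      rw [shift, hZP _ (by omega), indicator_of_mem (mem_Iio.2 (by nlinarith))] at hm'
      exact hm'
  exact indicator_Iio_le_of_shift_eq hper (fun i hi => hZP i (by omega)) hZ

theorem Primitive.not_forall_shift_indicator_eq {p : List ℕ} (hp : Primitive p) {N s : ℕ}
    (hs0 : 0 < s) (hsL : s < p.length) (hN : 1 ≤ N) :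
    ¬ ∀ m < p.length,
      shift ((Iio ((N + 1) * p.length)).indicator (cyclicWord p)) s m = cyclicWord p m := by
  intro h
  have hper : Periodic (cyclicWord p) s := by
    refine (periodic_cyclicWord p).of_eq_add_of_lt (by omega) fun m hm => ?_
    rw [← h m hm, shift, indicator_of_mem (mem_Iio.2 (by nlinarith))]
  have := Nat.le_of_dvd hs0 (hp.dvd_of_periodic hper)
  omega

theorem shift_add_length_of_shift_eq {w : ℕ → ℕ} {p : List ℕ} {a N : ℕ}
    (hY : shift w a = (Iio ((N + 1) * p.length)).indicator (cyclicWord p)) :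
    shift w (a + p.length) = (Iio (N * p.length)).indicator (cyclicWord p) := by
  rw [← shift_shift, hY, add_one_mul, shift_indicator_Iio_add (periodic_cyclicWord p)]

theorem lexLt_shift_add_length {w : ℕ → ℕ} {p : List ℕ} {a N : ℕ}
    (hY : shift w a = (Iio ((N + 1) * p.length)).indicator (cyclicWord p))
    (hne : shift w a ≠ shift w (a + p.length)) : LexLt (shift w (a + p.length)) (shift w a) := by
  refine lexLt_of_le_of_ne ?_ hne.symm
  rw [shift_add_length_of_shift_eq hY, hY]
  exact indicator_le_indicator_of_subset (Iio_subset_Iio (Nat.mul_le_mul_right _ N.le_succ))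
    fun _ => Nat.zero_le _

theorem not_lexLt_between_shifts {w : ℕ → ℕ} {p : List ℕ} (hp : Primitive p) {a N j : ℕ}
    (haN : a + p.length = N + 1)
    (hY : shift w a = (Iio ((N + 1) * p.length)).indicator (cyclicWord p)) (hj : j ≤ a + p.length)
    (hne : shift w a ≠ shift w j) (hXj : LexLt (shift w (a + p.length)) (shift w j)) :
    ¬ LexLt (shift w j) (shift w a) := by
  intro hjY
  set L := p.length
  set P := cyclicWord p
  have hX : shift w (a + L) = (Iio (N * L)).indicator P := shift_add_length_of_shift_eq hY
  have hXY : ∀ i < N * L, shift w (a + L) i = shift w a i := fun i hi => by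
    rw [hX, hY, indicator_of_mem (mem_Iio.2 hi), indicator_of_mem (mem_Iio.2 (by nlinarith))]
  have hjP : ∀ i < N * L, shift w j i = P i := fun i hi => by
    rw [hXj.eq_of_between hjY hXY i hi, hX, indicator_of_mem (mem_Iio.2 hi)]
  rcases lt_or_ge j a with hja | haj
  · have hZ : shift (shift w j) (a - j) = shift w a := by
      rw [shift_shift, Nat.add_sub_cancel' hja.le]
    refine hjY.asymm (lexLt_of_le_of_ne ?_ hne)
    rw [hY]
    exact indicator_cyclicWord_le_of_shift_eq (by omega) hjP (hZ.trans hY)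
  rcases eq_or_lt_of_le haj with rfl | haj
  · exact hne rfl
  rcases eq_or_lt_of_le hj with rfl | hjL
  · exact LexLt.irrefl _ hXj
  refine hp.not_forall_shift_indicator_eq (N := N) (s := j - a) (by omega) (by omega) (by omega)
    fun m hm => ?_
  rw [← hY, shift_shift, Nat.add_sub_cancel' haj.le]
  exact hjP m (by nlinarith)

/-- If `w = u p^{n-1} 0^∞` with `|u| = k-1`, `|p| = n-k`, `p` primitive, and
`π = Pat(w,Σ,n)` is defined, then `π(n) = π(k) - 1`. -/
theorem stmt12 {n k : ℕ} (hk1 : 1 ≤ k) (hk2 : k ≤ n - 1)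
    (u p : List ℕ) (hu : u.length = k - 1) (hp : p.length = n - k) (hprim : Primitive p)
    (π : Equiv.Perm (Fin n)) (hPat : Pat (wordOf u p n) n π) :
    (π ⟨n - 1, by omega⟩).val + 1 = (π ⟨k - 1, by omega⟩).val := by
  have hX : k - 1 + p.length = n - 1 := by omega
  have hY : shift (wordOf u p n) (k - 1) =
      (Iio ((n - 2 + 1) * p.length)).indicator (cyclicWord p) := by
    rw [← hu, shift_wordOf_length, show n - 2 + 1 = n - 1 by omega]
  have hne : ∀ j (hj : j < n), j ≠ k - 1 → shift (wordOf u p n) (k - 1) ≠ shift (wordOf u p n) j :=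
    fun j hj hjk => hPat.shift_ne (i := ⟨k - 1, by omega⟩) (j := ⟨j, hj⟩) (by simpa using hjk.symm)
  refine hPat.val_add_one_eq ?_ fun j hXj hjY => ?_
  · show LexLt (shift _ (n - 1)) (shift _ (k - 1))
    rw [← hX]
    exact lexLt_shift_add_length hY (hne _ (by omega) (by omega))
  rcases eq_or_ne (j : ℕ) (k - 1) with hj | hj
  · exact LexLt.irrefl _ (hj ▸ hjY)
  exact not_lexLt_between_shifts hprim (by omega) hY (by omega) (hne j j.isLt hj)
    (by rwa [hX]) hjY
end
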